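/- There exists an absolute constant C > 0 with the following property. Let M ≥ 2 be an even integer, S ≥ 1 an integer, n = M^S, and let A = (a_1, …, a_n) and B = (b_1, …, b_n) be sequences of nonnegative real numbers. Suppose there exists α with 0 < α ≤ 1 such that for every recursion interval (l, r] one has α·A_{Σ(l,r]} ≤ B_{Σ(l,r]} ≤ A_{Σ(l,r]}. Then treerd_{M,S}(A, B) ≤ C·(1 + ln(1/α))·( (∑_{x=1}^{n} b_x)·S^{51/100} + (max_x a_x)·n·2^{−S^{3/200}} ). -/

import Mathlib

/-!
Let `d(I) = md_M(A_I) / A_Σ(I)` be the relative deviation of a recursion interval `I`. Then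
`rd_M = B_Σ(I) · d(I)`, so `treerd = ∑ₓ bₓ W(x)` where `W(x)` (resp. `Q(x)`) is the sum of `d`
(resp. `d²`) over the `S` recursion intervals containing the leaf `x`.

Writing `|a - u| = |√a - √u| (√a + √u)`, Cauchy–Schwarz gives the Hellinger-type bound
`exp (d² / 8) · ∑ᵢ √aᵢ ≤ √(M ∑ᵢ aᵢ)` for the sums `aᵢ` of `A` over the `M` children of an interval,
and iterating it down the tree yields `∑ₓ √aₓ · exp (Q(x) / 8) ≤ √(n · A_Σ)`. Fix `q = S^{1/50}`.
Where `Q(x) ≤ q`, Cauchy–Schwarz gives `W(x) ≤ √(S q) = S^{51/100}`. The leaves with `Q(x) > q`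
carry `A`-mass at most `e^{-q/8} · n · max aₓ` by the previous bound, `W ≤ 2S` there, and since `Q`
is constant on scale-1 intervals their `B`-mass is at most their `A`-mass. Finally
`2S e^{-S^{1/50}/8} = O(2^{-S^{3/200}})`.
-/

/-- Sum of the sequence `A` over the interval of indices `(l, r] = {l+1, …, r}`. -/
noncomputable def iSum (A : ℕ → ℝ) (l r : ℕ) : ℝ := ∑ x ∈ Finset.Ioc l r, A x

/-- Total deviation `md_M` of the scale-`s` interval `(l, l + M^s]` of the sequence `A`. -/
noncomputable def mdAt (M s l : ℕ) (A : ℕ → ℝ) : ℝ :=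
  ∑ i ∈ Finset.range M,
    |iSum A (l + i * M ^ (s - 1)) (l + (i + 1) * M ^ (s - 1)) -
      (1 / (M : ℝ)) * iSum A l (l + M ^ s)|

/-- Scaled total deviation `rd_M` of `A` by `B` on the scale-`s` interval `(l, l + M^s]`:
`(B_Σ/A_Σ)·md_M(A)` if `A_Σ ≠ 0`, and `0` otherwise. -/
noncomputable def rdAt (M s l : ℕ) (A B : ℕ → ℝ) : ℝ :=
  if iSum A l (l + M ^ s) = 0 then 0
  else (iSum B l (l + M ^ s) / iSum A l (l + M ^ s)) * mdAt M s l A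

/-- Scaled tree total deviation `treerd_{M,S}(A,B)`: sum of `rd_M` over all recursion
intervals. -/
noncomputable def treerd (M S : ℕ) (A B : ℕ → ℝ) : ℝ :=
  ∑ s ∈ Finset.Icc 1 S, ∑ k ∈ Finset.range (M ^ (S - s)), rdAt M s (k * M ^ s) A B

open Finset

lemma one_sub_mul_exp_le_one (x : ℝ) : (1 - x) * Real.exp x ≤ 1 := by
  calc (1 - x) * Real.exp x ≤ Real.exp (-x) * Real.exp x :=
        mul_le_mul_of_nonneg_right (Real.one_sub_le_exp_neg x) (Real.exp_pos x).le
    _ = 1 := by rw [← Real.exp_add, neg_add_cancel, Real.exp_zero]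

section Hellinger

variable {ι : Type*} (s : Finset ι) (a : ι → ℝ)

lemma sum_sqrt_le_sqrt_card_mul_sum (ha : ∀ i ∈ s, 0 ≤ a i) :
    ∑ i ∈ s, √(a i) ≤ √(#s * ∑ i ∈ s, a i) := by
  have h := Real.sum_mul_le_sqrt_mul_sqrt s (fun _ ↦ 1) (fun i ↦ √(a i))
  simp only [one_mul, one_pow, sum_const, nsmul_eq_mul, mul_one] at h
  rwa [sum_congr rfl fun i hi ↦ Real.sq_sqrt (ha i hi), ← Real.sqrt_mul (Nat.cast_nonneg _)] at h

lemma sum_abs_sub_div_card_le (ha : ∀ i ∈ s, 0 ≤ a i) :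
    ∑ i ∈ s, |a i - (∑ j ∈ s, a j) / #s| ≤ 2 * ∑ i ∈ s, a i := by
  set T := ∑ j ∈ s, a j
  have hT : 0 ≤ T := sum_nonneg ha
  calc ∑ i ∈ s, |a i - T / #s| ≤ ∑ i ∈ s, (a i + T / #s) := by
        refine sum_le_sum fun i hi ↦ (abs_sub _ _).trans_eq ?_
        rw [abs_of_nonneg (ha i hi), abs_of_nonneg (by positivity)]
    _ = T + #s * (T / #s) := by rw [sum_add_distrib, sum_const, nsmul_eq_mul]
    _ ≤ 2 * T := by
        rcases s.eq_empty_or_nonempty with rfl | hs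
        · simp [T]
        · rw [mul_div_cancel₀ _ (by exact_mod_cast hs.card_pos.ne')]; linarith

lemma sq_sum_abs_sub_le (ha : ∀ i ∈ s, 0 ≤ a i) {u : ℝ} (hu : 0 ≤ u) :
    (∑ i ∈ s, |a i - u|) ^ 2 ≤
      (∑ i ∈ s, a i + #s * u - 2 * √u * ∑ i ∈ s, √(a i)) * (2 * (∑ i ∈ s, a i + #s * u)) := by
  have hsq : ∀ i ∈ s, √(a i) ^ 2 = a i := fun i hi ↦ Real.sq_sqrt (ha i hi)
  have hu' : √u ^ 2 = u := Real.sq_sqrt hu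
  have hfac : ∀ i ∈ s, |a i - u| = |√(a i) - √u| * (√(a i) + √u) := fun i hi ↦ by
    rw [← abs_of_nonneg (by positivity : 0 ≤ √(a i) + √u), ← abs_mul]
    congr 1; nlinarith [hsq i hi]
  have hminus : ∑ i ∈ s, |√(a i) - √u| ^ 2 = ∑ i ∈ s, a i + #s * u - 2 * √u * ∑ i ∈ s, √(a i) := by
    rw [mul_sum, ← nsmul_eq_mul, ← sum_const, ← sum_add_distrib, ← sum_sub_distrib]
    exact sum_congr rfl fun i hi ↦ by rw [sq_abs]; nlinarith [hsq i hi]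
  have hplus : ∑ i ∈ s, (√(a i) + √u) ^ 2 ≤ 2 * (∑ i ∈ s, a i + #s * u) := by
    rw [← nsmul_eq_mul, ← sum_const, ← sum_add_distrib, mul_sum]
    exact sum_le_sum fun i hi ↦ add_sq_le.trans_eq (by rw [hsq i hi, hu'])
  calc (∑ i ∈ s, |a i - u|) ^ 2 = (∑ i ∈ s, |√(a i) - √u| * (√(a i) + √u)) ^ 2 := by
        rw [sum_congr rfl hfac]
    _ ≤ (∑ i ∈ s, |√(a i) - √u| ^ 2) * ∑ i ∈ s, (√(a i) + √u) ^ 2 :=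
        sum_mul_sq_le_sq_mul_sq _ _ _
    _ ≤ _ := by
        rw [hminus]
        exact mul_le_mul_of_nonneg_left hplus (hminus ▸ sum_nonneg fun i _ ↦ sq_nonneg _)

theorem exp_sq_div_eight_mul_sum_sqrt_le (ha : ∀ i ∈ s, 0 ≤ a i) :
    Real.exp (((∑ i ∈ s, |a i - (∑ j ∈ s, a j) / #s|) / ∑ i ∈ s, a i) ^ 2 / 8) *
        ∑ i ∈ s, √(a i) ≤ √(#s * ∑ i ∈ s, a i) := by
  set T := ∑ i ∈ s, a i
  set c := ∑ i ∈ s, √(a i)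
  set D := ∑ i ∈ s, |a i - T / #s|
  have hCS : c ≤ √(#s * T) := sum_sqrt_le_sqrt_card_mul_sum s a ha
  rcases (show 0 ≤ T from sum_nonneg ha).eq_or_lt with hT | hT
  · rw [← hT] at hCS ⊢
    simpa using hCS
  have hN : (0 : ℝ) < #s := by
    exact_mod_cast card_pos.2 (nonempty_of_sum_ne_zero hT.ne')
  set u := T / #s
  have hu : 0 < u := div_pos hT hN
  have hNu : (#s : ℝ) * u = T := mul_div_cancel₀ _ hN.ne'
  have hdev : D ^ 2 ≤ (T + T - 2 * √u * c) * (2 * (T + T)) := by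
    have h := sq_sum_abs_sub_le s a ha hu.le
    rwa [hNu] at h
  set d := D / T
  have hD : D = d * T := (div_mul_cancel₀ _ hT.ne').symm
  have hsu : √u * √(#s * T) = T := by
    rw [← Real.sqrt_mul hu.le, ← mul_assoc, mul_comm u, hNu, Real.sqrt_mul_self hT.le]
  have hc : c ≤ √(#s * T) * (1 - d ^ 2 / 8) := by
    refine le_of_mul_le_mul_left ?_ (Real.sqrt_pos.2 hu)
    rw [← mul_assoc, hsu]
    rw [hD] at hdev
    nlinarith
  calc Real.exp (d ^ 2 / 8) * c ≤ Real.exp (d ^ 2 / 8) * (√(#s * T) * (1 - d ^ 2 / 8)) := by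
        gcongr
    _ = √(#s * T) * ((1 - d ^ 2 / 8) * Real.exp (d ^ 2 / 8)) := by ring
    _ ≤ √(#s * T) := mul_le_of_le_one_right (Real.sqrt_nonneg _) (one_sub_mul_exp_le_one _)

end Hellinger

lemma sum_Ioc_eq_sum_range_sum {β : Type*} [AddCommMonoid β] (f : ℕ → β) (l c m : ℕ) :
    ∑ x ∈ Ioc l (l + m * c), f x = ∑ i ∈ range m, ∑ x ∈ Ioc (l + i * c) (l + i * c + c), f x := by
  induction m with
  | zero => simp
  | succ m ih =>
    rw [sum_range_succ, ← ih, show l + (m + 1) * c = l + m * c + c by ring]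
    exact (sum_Ioc_consecutive f (by omega) (by omega)).symm

def node (M s k : ℕ) : Finset ℕ := Ioc (k * M ^ s) (k * M ^ s + M ^ s)

section Node

variable {M s k x : ℕ}

lemma node_zero (M S : ℕ) : node M S 0 = Ioc 0 (M ^ S) := by simp [node]

lemma div_eq_of_mem_node (hx : x ∈ node M s k) : (x - 1) / M ^ s = k := by
  simp only [node, mem_Ioc] at hx
  exact Nat.div_eq_of_lt_le (by omega) (by rw [add_one_mul]; omega)

lemma node_subset_node_succ {i : ℕ} (hi : i < M) : node M s (k * M + i) ⊆ node M (s + 1) k := by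
  have h1 : (k * M + i) * M ^ s = k * M ^ (s + 1) + i * M ^ s := by ring
  have h2 : i * M ^ s + M ^ s ≤ M ^ (s + 1) := by
    rw [pow_succ, ← add_one_mul, mul_comm]; exact Nat.mul_le_mul_left _ hi
  intro x hx
  simp only [node, mem_Ioc, h1] at hx ⊢
  omega

lemma node_div_subset {S : ℕ} (hx : x ∈ node M S 0) (hs : s ≤ S) :
    node M s ((x - 1) / M ^ s) ⊆ node M S 0 := by
  rw [node_zero, mem_Ioc] at hx
  have hMS : M ^ S = M ^ (S - s) * M ^ s := by rw [← pow_add, Nat.sub_add_cancel hs]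
  have hpos : 0 < M ^ s := Nat.pos_of_ne_zero fun h ↦ by rw [h, mul_zero] at hMS; omega
  have hk : (x - 1) / M ^ s < M ^ (S - s) := by
    rw [Nat.div_lt_iff_lt_mul hpos]; omega
  have : ((x - 1) / M ^ s + 1) * M ^ s ≤ M ^ S := hMS ▸ Nat.mul_le_mul_right _ hk
  intro y hy
  simp only [node, mem_Ioc, add_one_mul] at hy this ⊢
  omega

lemma sum_node_succ (f : ℕ → ℝ) (M s k : ℕ) :
    ∑ x ∈ node M (s + 1) k, f x = ∑ i ∈ range M, ∑ x ∈ node M s (k * M + i), f x := by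
  rw [node, show k * M ^ (s + 1) + M ^ (s + 1) = k * M ^ (s + 1) + M * M ^ s by ring,
    sum_Ioc_eq_sum_range_sum]
  refine sum_congr rfl fun i _ ↦ ?_
  rw [node, show (k * M + i) * M ^ s = k * M ^ (s + 1) + i * M ^ s by ring]

lemma sum_node_mul_div {S : ℕ} (f g : ℕ → ℝ) (hs : s ≤ S) :
    ∑ x ∈ node M S 0, f x * g ((x - 1) / M ^ s) =
      ∑ k ∈ range (M ^ (S - s)), g k * ∑ x ∈ node M s k, f x := by
  rw [node_zero, show M ^ S = 0 + M ^ (S - s) * M ^ s by rw [← pow_add, Nat.sub_add_cancel hs,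
    zero_add], sum_Ioc_eq_sum_range_sum]
  refine sum_congr rfl fun k _ ↦ ?_
  rw [mul_sum, zero_add]
  exact sum_congr rfl fun x hx ↦ by rw [div_eq_of_mem_node (k := k) hx, mul_comm]

end Node

/-- `d(I)` for `I = node M s k`; the junk value `x / 0 = 0` agrees with the convention `rd_M = 0`
when `A_Σ(I) = 0`. -/
noncomputable def relDev (M : ℕ) (A : ℕ → ℝ) (s k : ℕ) : ℝ :=
  mdAt M s (k * M ^ s) A / ∑ x ∈ node M s k, A x

section RelDev

variable {M s k : ℕ} {A : ℕ → ℝ}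

lemma rdAt_eq_mul_relDev (M s k : ℕ) (A B : ℕ → ℝ) :
    rdAt M s (k * M ^ s) A B = (∑ x ∈ node M s k, B x) * relDev M A s k := by
  by_cases h : iSum A (k * M ^ s) (k * M ^ s + M ^ s) = 0
  · rw [rdAt, if_pos h, relDev, show ∑ x ∈ node M s k, A x = 0 from h, div_zero, mul_zero]
  · rw [rdAt, if_neg h, relDev, div_mul_eq_mul_div, mul_div_assoc]
    rfl

lemma relDev_succ (M s k : ℕ) (A : ℕ → ℝ) :
    relDev M A (s + 1) k =
      (∑ i ∈ range M, |∑ x ∈ node M s (k * M + i), A x -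
          (∑ j ∈ range M, ∑ x ∈ node M s (k * M + j), A x) / M|) /
        ∑ i ∈ range M, ∑ x ∈ node M s (k * M + i), A x := by
  rw [relDev, ← sum_node_succ, mdAt, Nat.add_sub_cancel]
  refine congrArg (· / _) (sum_congr rfl fun i _ ↦ ?_)
  have hchild : iSum A (k * M ^ (s + 1) + i * M ^ s) (k * M ^ (s + 1) + (i + 1) * M ^ s) =
      ∑ x ∈ node M s (k * M + i), A x := by
    rw [node, iSum]; congr 2 <;> ring
  rw [one_div_mul_eq_div, hchild]
  rfl

lemma relDev_le_two (hs : 1 ≤ s) (hA : ∀ x ∈ node M s k, 0 ≤ A x) : relDev M A s k ≤ 2 := by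
  obtain ⟨s, rfl⟩ := Nat.exists_eq_add_of_le' hs
  have hchild : ∀ i ∈ range M, 0 ≤ ∑ x ∈ node M s (k * M + i), A x := fun i hi ↦
    sum_nonneg fun x hx ↦ hA x (node_subset_node_succ (mem_range.1 hi) hx)
  rw [relDev_succ]
  refine div_le_of_le_mul₀ (sum_nonneg hchild) zero_le_two ?_
  simpa using sum_abs_sub_div_card_le (range M) _ hchild

end RelDev

/-- `W(x)`; here `(x - 1) / M ^ t` indexes the scale-`t` interval containing the leaf `x ≥ 1`. -/
noncomputable def pathDev (M S : ℕ) (A : ℕ → ℝ) (x : ℕ) : ℝ :=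
  ∑ t ∈ Icc 1 S, relDev M A t ((x - 1) / M ^ t)

noncomputable def pathDevSq (M S : ℕ) (A : ℕ → ℝ) (x : ℕ) : ℝ :=
  ∑ t ∈ Icc 1 S, relDev M A t ((x - 1) / M ^ t) ^ 2

section Path

variable {M S : ℕ} {A : ℕ → ℝ}

theorem treerd_eq_sum_mul_pathDev (M S : ℕ) (A B : ℕ → ℝ) :
    treerd M S A B = ∑ x ∈ node M S 0, B x * pathDev M S A x := by
  simp only [treerd, pathDev, mul_sum]
  rw [sum_comm]
  refine sum_congr rfl fun s hs ↦ ?_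
  rw [sum_node_mul_div B (relDev M A s) (mem_Icc.1 hs).2]
  exact sum_congr rfl fun k _ ↦ by rw [rdAt_eq_mul_relDev, mul_comm]

lemma pathDevSq_eq_sum_div (M S : ℕ) (A : ℕ → ℝ) (x : ℕ) :
    pathDevSq M S A x = ∑ t ∈ Icc 1 S, relDev M A t ((x - 1) / M ^ 1 / M ^ (t - 1)) ^ 2 :=
  sum_congr rfl fun t ht ↦ by
    rw [Nat.div_div_eq_div_mul, ← pow_add, Nat.add_sub_cancel' (mem_Icc.1 ht).1]

lemma pathDev_le (hA : ∀ x ∈ node M S 0, 0 ≤ A x) {x : ℕ} (hx : x ∈ node M S 0) (q : ℝ) :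
    pathDev M S A x ≤ √(S * q) + 2 * S * if q < pathDevSq M S A x then 1 else 0 := by
  have hcs : pathDev M S A x ≤ √(S * pathDevSq M S A x) := by
    refine (le_abs_self _).trans (Real.abs_le_sqrt ?_)
    have h := sq_sum_le_card_mul_sum_sq (s := Icc 1 S) (f := fun t ↦ relDev M A t ((x - 1) / M ^ t))
    rwa [Nat.card_Icc, add_tsub_cancel_right] at h
  have htwo : pathDev M S A x ≤ 2 * S := by
    refine (sum_le_card_nsmul _ _ 2 fun t ht ↦ ?_).trans_eq (by simp [mul_comm])
    exact relDev_le_two (mem_Icc.1 ht).1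
      fun y hy ↦ hA y (node_div_subset hx (mem_Icc.1 ht).2 hy)
  split_ifs with h
  · linarith [Real.sqrt_nonneg (S * q)]
  · rw [mul_zero, add_zero]
    exact hcs.trans (Real.sqrt_le_sqrt (by gcongr; exact not_lt.1 h))

theorem sum_sqrt_mul_exp_pathDevSq_le (A : ℕ → ℝ) :
    ∀ s k, (∀ x ∈ node M s k, 0 ≤ A x) →
      ∑ x ∈ node M s k, √(A x) * Real.exp (pathDevSq M s A x / 8) ≤
        √(M ^ s * ∑ x ∈ node M s k, A x)
  | 0, k, _ => by simp [node, pathDevSq]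
  | s + 1, k, hA => by
    set d := relDev M A (s + 1) k
    have hchild : ∀ i ∈ range M, ∀ x ∈ node M s (k * M + i), 0 ≤ A x := fun i hi x hx ↦
      hA x (node_subset_node_succ (mem_range.1 hi) hx)
    have hpath : ∀ i ∈ range M, ∀ x ∈ node M s (k * M + i),
        pathDevSq M (s + 1) A x = pathDevSq M s A x + d ^ 2 := fun i hi x hx ↦ by
      rw [pathDevSq, sum_Icc_succ_top (by omega),
        div_eq_of_mem_node (node_subset_node_succ (mem_range.1 hi) hx)]
      rfl
    have hHel := exp_sq_div_eight_mul_sum_sqrt_le (range M)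
      (fun i ↦ ∑ x ∈ node M s (k * M + i), A x) fun i hi ↦ sum_nonneg (hchild i hi)
    rw [card_range, ← relDev_succ, ← sum_node_succ] at hHel
    calc ∑ x ∈ node M (s + 1) k, √(A x) * Real.exp (pathDevSq M (s + 1) A x / 8)
        = Real.exp (d ^ 2 / 8) * ∑ i ∈ range M, ∑ x ∈ node M s (k * M + i),
            √(A x) * Real.exp (pathDevSq M s A x / 8) := by
          rw [sum_node_succ, mul_sum]
          refine sum_congr rfl fun i hi ↦ ?_
          rw [mul_sum]
          refine sum_congr rfl fun x hx ↦ ?_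
          rw [hpath i hi x hx, add_div, Real.exp_add]
          ring
      _ ≤ Real.exp (d ^ 2 / 8) * ∑ i ∈ range M, √(M ^ s) * √(∑ x ∈ node M s (k * M + i), A x) := by
          gcongr with i hi
          rw [← Real.sqrt_mul (by positivity)]
          exact sum_sqrt_mul_exp_pathDevSq_le A s (k * M + i) (hchild i hi)
      _ = √(M ^ s) * (Real.exp (d ^ 2 / 8) *
            ∑ i ∈ range M, √(∑ x ∈ node M s (k * M + i), A x)) := by
          rw [← mul_sum]; ring
      _ ≤ √(M ^ s) * √(M * ∑ x ∈ node M (s + 1) k, A x) := by gcongr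
      _ = √(M ^ (s + 1) * ∑ x ∈ node M (s + 1) k, A x) := by
          rw [← Real.sqrt_mul (by positivity), ← mul_assoc, ← pow_succ]

end Path

section Estimate

variable {M S : ℕ} {A B : ℕ → ℝ}

theorem sum_mul_indicator_pathDevSq_le (hA : ∀ x ∈ node M S 0, 0 ≤ A x) {m : ℝ} (hm : 0 ≤ m)
    (hAm : ∀ x ∈ node M S 0, A x ≤ m) (q : ℝ) :
    ∑ x ∈ node M S 0, A x * (if q < pathDevSq M S A x then 1 else 0) ≤
      Real.exp (-q / 8) * (M ^ S * m) := by
  have hpoint : ∀ x ∈ node M S 0, A x * (if q < pathDevSq M S A x then 1 else 0) ≤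
      Real.exp (-q / 8) * √m * (√(A x) * Real.exp (pathDevSq M S A x / 8)) := fun x hx ↦ by
    split_ifs with h
    · have hsqrt : A x ≤ √m * √(A x) := by
        calc A x = √(A x) * √(A x) := (Real.mul_self_sqrt (hA x hx)).symm
          _ ≤ √m * √(A x) := by gcongr; exact hAm x hx
      have hexp : 1 ≤ Real.exp (-q / 8) * Real.exp (pathDevSq M S A x / 8) := by
        rw [← Real.exp_add]; exact Real.one_le_exp (by linarith)
      calc A x * 1 ≤ √m * √(A x) * (Real.exp (-q / 8) * Real.exp (pathDevSq M S A x / 8)) := by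
            rw [mul_one]; exact hsqrt.trans (le_mul_of_one_le_right (by positivity) hexp)
        _ = _ := by ring
    · rw [mul_zero]; positivity
  have hsum : ∑ x ∈ node M S 0, A x ≤ M ^ S * m := by
    simpa [node_zero] using sum_le_card_nsmul _ _ _ hAm
  have hroot := sum_sqrt_mul_exp_pathDevSq_le A S 0 hA
  calc _ ≤ Real.exp (-q / 8) * √m *
        ∑ x ∈ node M S 0, √(A x) * Real.exp (pathDevSq M S A x / 8) := by
        rw [mul_sum]; exact sum_le_sum hpoint
    _ ≤ Real.exp (-q / 8) * √m * √(M ^ S * (M ^ S * m)) := by gcongr; exact hroot.trans (by gcongr)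
    _ = Real.exp (-q / 8) * (M ^ S * m) := by
        rw [mul_assoc, ← Real.sqrt_mul hm, show m * (M ^ S * (M ^ S * m)) = (M ^ S * m) ^ 2 by ring,
          Real.sqrt_sq (by positivity)]

theorem treerd_le_sqrt_mul_add (hS : 1 ≤ S) (hA : ∀ x ∈ node M S 0, 0 ≤ A x) (hB : ∀ x ∈ node M S 0, 0 ≤ B x)
    (hBA : ∀ k ∈ range (M ^ (S - 1)), ∑ x ∈ node M 1 k, B x ≤ ∑ x ∈ node M 1 k, A x)
    {m : ℝ} (hm : 0 ≤ m) (hAm : ∀ x ∈ node M S 0, A x ≤ m) (q : ℝ) :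
    treerd M S A B ≤
      √(S * q) * ∑ x ∈ node M S 0, B x + 2 * S * (Real.exp (-q / 8) * (M ^ S * m)) := by
  set bad : ℕ → ℝ := fun x ↦ if q < pathDevSq M S A x then 1 else 0
  -- `pathDevSq` is constant on scale-1 intervals, where the mass of `B` is at most that of `A`.
  have hbad : ∑ x ∈ node M S 0, B x * bad x ≤ ∑ x ∈ node M S 0, A x * bad x := by
    set g : ℕ → ℝ := fun j ↦
      if q < ∑ t ∈ Icc 1 S, relDev M A t (j / M ^ (t - 1)) ^ 2 then 1 else 0
    have hg : ∀ x, bad x = g ((x - 1) / M ^ 1) := fun x ↦ by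
      simp only [bad, g, pathDevSq_eq_sum_div]
    simp only [hg]
    rw [sum_node_mul_div _ _ hS, sum_node_mul_div _ _ hS]
    exact sum_le_sum fun k hk ↦
      mul_le_mul_of_nonneg_left (hBA k hk) (by simp only [g]; split_ifs <;> norm_num)
  calc treerd M S A B = ∑ x ∈ node M S 0, B x * pathDev M S A x := treerd_eq_sum_mul_pathDev M S A B
    _ ≤ ∑ x ∈ node M S 0, B x * (√(S * q) + 2 * S * bad x) :=
        sum_le_sum fun x hx ↦ mul_le_mul_of_nonneg_left (pathDev_le hA hx q) (hB x hx)
    _ = √(S * q) * ∑ x ∈ node M S 0, B x + 2 * S * ∑ x ∈ node M S 0, B x * bad x := by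
        simp only [mul_add, sum_add_distrib, mul_sum]
        congr 1 <;> exact sum_congr rfl fun x _ ↦ by ring
    _ ≤ √(S * q) * ∑ x ∈ node M S 0, B x + 2 * S * ∑ x ∈ node M S 0, A x * bad x := by gcongr
    _ ≤ _ := by gcongr; exact sum_mul_indicator_pathDevSq_le hA hm hAm q

end Estimate

lemma two_mul_mul_exp_neg_le {S : ℝ} (hS : 1 ≤ S) :
    2 * S * Real.exp (-S ^ ((1 : ℝ) / 50) / 8) ≤
      Real.exp (10 ^ 12) * (2 : ℝ) ^ (-S ^ ((3 : ℝ) / 200)) := by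
  set y := S ^ ((1 : ℝ) / 200)
  have hy : 1 ≤ y := Real.one_le_rpow hS (by norm_num)
  have hpow : ∀ n : ℕ, S ^ ((n : ℝ) / 200) = y ^ n := fun n ↦ by
    rw [← Real.rpow_natCast, ← Real.rpow_mul (by linarith)]; ring_nf
  have hlogS : Real.log S ≤ 200 * y ^ 3 := by
    have hlog : Real.log S = 200 * Real.log y := by
      rw [Real.log_rpow (by linarith)]; ring
    have : Real.log y ≤ y ^ 3 := by
      linarith [Real.log_le_sub_one_of_pos (by linarith : 0 < y), le_self_pow₀ hy three_ne_zero]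
    linarith
  have hlog2 : Real.log 2 < 1 := by linarith [Real.log_two_lt_d9]
  have hlog2' : 0 < Real.log 2 := Real.log_pos one_lt_two
  rw [show (1 : ℝ) / 50 = (4 : ℕ) / 200 by norm_num, show (3 : ℝ) / 200 = (3 : ℕ) / 200 by norm_num,
    hpow, hpow, ← Real.exp_log (by positivity : 0 < 2 * S), ← Real.exp_add,
    Real.rpow_def_of_pos two_pos, ← Real.exp_add, Real.exp_le_exp,
    Real.log_mul two_ne_zero (by positivity)]
  rcases le_or_gt y 1608 with hy' | hy'
  · have : y ^ 3 ≤ 1608 ^ 3 := by gcongr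
    nlinarith [pow_nonneg (by linarith : (0 : ℝ) ≤ y) 4]
  · nlinarith [pow_pos (by linarith : (0 : ℝ) < y) 3]

theorem treerd_le_rpow_add {M S : ℕ} {A B : ℕ → ℝ} (hS : 1 ≤ S)
    (hA : ∀ x ∈ node M S 0, 0 ≤ A x) (hB : ∀ x ∈ node M S 0, 0 ≤ B x)
    (hBA : ∀ k ∈ range (M ^ (S - 1)), ∑ x ∈ node M 1 k, B x ≤ ∑ x ∈ node M 1 k, A x)
    {m : ℝ} (hm : 0 ≤ m) (hAm : ∀ x ∈ node M S 0, A x ≤ m) :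
    treerd M S A B ≤ (∑ x ∈ node M S 0, B x) * (S : ℝ) ^ ((51 : ℝ) / 100) +
      Real.exp (10 ^ 12) * (m * M ^ S * (2 : ℝ) ^ (-(S : ℝ) ^ ((3 : ℝ) / 200))) := by
  have hsqrt : √(S * (S : ℝ) ^ ((1 : ℝ) / 50)) = (S : ℝ) ^ ((51 : ℝ) / 100) := by
    rw [Real.sqrt_eq_rpow, ← Real.rpow_one_add' (Nat.cast_nonneg S) (by norm_num),
      ← Real.rpow_mul (Nat.cast_nonneg S)]
    norm_num
  have hsmall := mul_le_mul_of_nonneg_right (two_mul_mul_exp_neg_le (S := S) (by exact_mod_cast hS))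
    (by positivity : 0 ≤ m * (M : ℝ) ^ S)
  refine (treerd_le_sqrt_mul_add hS hA hB hBA hm hAm ((S : ℝ) ^ ((1 : ℝ) / 50))).trans ?_
  rw [hsqrt, mul_comm (_ ^ _)]
  linarith

/-- There is an absolute constant `C > 0` such that: for every even `M ≥ 2`,
`S ≥ 1`, `n = M^S`, nonnegative sequences `A, B`, and `0 < α ≤ 1` with
`α·A_Σ(l,r] ≤ B_Σ(l,r] ≤ A_Σ(l,r]` on every recursion interval `(l,r]`, one has
`treerd_{M,S}(A,B) ≤ C·(1 + ln(1/α))·((∑ b_x)·S^{51/100} + (max_x a_x)·n·2^{−S^{3/200}})`. -/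
theorem stmt4 :
    ∃ C : ℝ, 0 < C ∧
      ∀ (M S : ℕ) (hM : 2 ≤ M) (_hE : Even M) (hS : 1 ≤ S) (A B : ℕ → ℝ)
        (hA : ∀ x ∈ Finset.Icc 1 (M ^ S), 0 ≤ A x)
        (hB : ∀ x ∈ Finset.Icc 1 (M ^ S), 0 ≤ B x)
        (α : ℝ) (hα0 : 0 < α) (hα1 : α ≤ 1)
        (hratio : ∀ s ∈ Finset.Icc 1 S, ∀ k ∈ Finset.range (M ^ (S - s)),
          α * iSum A (k * M ^ s) (k * M ^ s + M ^ s) ≤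
              iSum B (k * M ^ s) (k * M ^ s + M ^ s) ∧
            iSum B (k * M ^ s) (k * M ^ s + M ^ s) ≤
              iSum A (k * M ^ s) (k * M ^ s + M ^ s)),
        treerd M S A B ≤
          C * (1 + Real.log (1 / α)) *
            ((∑ x ∈ Finset.Icc 1 (M ^ S), B x) * (S : ℝ) ^ ((51 : ℝ) / 100) +
              ((Finset.Icc 1 (M ^ S)).sup'
                  (Finset.nonempty_Icc.mpr (Nat.one_le_pow S M (by omega))) A) *
                (M ^ S : ℝ) * (2 : ℝ) ^ (-(S : ℝ) ^ ((3 : ℝ) / 200))) := by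
  refine ⟨Real.exp (10 ^ 12), Real.exp_pos _, ?_⟩
  intro M S hM _ hS A B hA hB α hα0 hα1 hratio
  have hroot : Icc 1 (M ^ S) = node M S 0 := by
    ext x; simp only [node_zero, mem_Icc, mem_Ioc]; omega
  have h1 : 1 ∈ Icc 1 (M ^ S) := mem_Icc.2 ⟨le_rfl, Nat.one_le_pow S M (by omega)⟩
  have hm : 0 ≤ (Icc 1 (M ^ S)).sup' ⟨1, h1⟩ A := (hA 1 h1).trans (le_sup' A h1)
  have hbound := treerd_le_rpow_add hS (fun x hx ↦ hA x (hroot ▸ hx))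
    (fun x hx ↦ hB x (hroot ▸ hx)) (fun k hk ↦ (hratio 1 (mem_Icc.2 ⟨le_rfl, hS⟩) k hk).2) hm
    (fun x hx ↦ le_sup' A (hroot ▸ hx))
  rw [← hroot] at hbound
  have hC : 1 ≤ Real.exp (10 ^ 12) := Real.one_le_exp (by norm_num)
  have hK : 1 ≤ 1 + Real.log (1 / α) := by
    linarith [Real.log_nonneg (one_le_one_div hα0 hα1)]
  have hX : 0 ≤ (∑ x ∈ Icc 1 (M ^ S), B x) * (S : ℝ) ^ ((51 : ℝ) / 100) :=
    mul_nonneg (sum_nonneg hB) (by positivity)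
  refine hbound.trans ?_
  rw [mul_add]
  exact add_le_add (le_mul_of_one_le_left hX (one_le_mul_of_one_le_of_one_le hC hK))
    (mul_le_mul_of_nonneg_right (le_mul_of_one_le_right (zero_le_one.trans hC) hK) (by positivity))
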